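/- Let p and q be twice continuously differentiable positive probability densities on ℝ with p(y)·(d/dy) log q(y) → 0 as |y| → ±∞ and all relevant integrals finite. Then ∫ H(y,q) p(y) dy - ∫ H(y,p) p(y) dy = ∫ ((d/dy) log p(y) - (d/dy) log q(y))² p(y) dy. -/

import Mathlib

open MeasureTheory Real Filter

/-- Score function `(log p)'` of a positive density `p` on `ℝ`. -/
noncomputable def scoreFn (p : ℝ → ℝ) (y : ℝ) : ℝ := deriv (fun w => Real.log (p w)) y

/-- Hyvärinen score `H(y,p) = 2 (log p)''(y) + ((log p)'(y))²`. -/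
noncomputable def hyvScore (p : ℝ → ℝ) (y : ℝ) : ℝ :=
  2 * deriv (scoreFn p) y + (scoreFn p y) ^ 2

/-
Since `p' = (log p)' p`, the difference of the integrands,
`H(y,q) p - H(y,p) p - ((log p)' - (log q)')² p`, is the exact derivative of
`2 p ((log q)' - (log p)')`. That function tends to `0` at `±∞`, so the integral of the
difference vanishes.
-/

lemma differentiable_scoreFn {p : ℝ → ℝ} (hp : ContDiff ℝ 2 p) (hp₀ : ∀ y, p y ≠ 0) :
    Differentiable ℝ (scoreFn p) := by
  have hlog : ContDiff ℝ 2 (fun w => Real.log (p w)) :=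
    contDiff_iff_contDiffAt.mpr fun y => hp.contDiffAt.log (hp₀ y)
  exact ((contDiff_succ_iff_deriv (n := 1)).mp hlog).2.2.differentiable one_ne_zero

lemma hasDerivAt_scoreFn_mul_self {p : ℝ → ℝ} {y : ℝ} (hp : DifferentiableAt ℝ p y)
    (hy : p y ≠ 0) :
    HasDerivAt p (scoreFn p y * p y) y := by
  have hscore : scoreFn p y = deriv p y / p y := (hp.hasDerivAt.log hy).deriv
  rw [hscore, div_mul_cancel₀ _ hy]
  exact hp.hasDerivAt

lemma hasDerivAt_mul_scoreFn_sub {p q : ℝ → ℝ} (hp : ContDiff ℝ 2 p) (hq : ContDiff ℝ 2 q)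
    (hp₀ : ∀ y, p y ≠ 0) (hq₀ : ∀ y, q y ≠ 0) (y : ℝ) :
    HasDerivAt (fun y => 2 * (p y * scoreFn q y - p y * scoreFn p y))
      (hyvScore q y * p y - hyvScore p y * p y - (scoreFn p y - scoreFn q y) ^ 2 * p y) y := by
  have hp' := hasDerivAt_scoreFn_mul_self (hp.differentiable two_ne_zero y) (hp₀ y)
  have hsp := (differentiable_scoreFn hp hp₀ y).hasDerivAt
  have hsq := (differentiable_scoreFn hq hq₀ y).hasDerivAt
  refine (((hp'.mul hsq).sub (hp'.mul hsp)).const_mul 2).congr_deriv ?_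
  simp only [hyvScore]
  ring

theorem expected_hyvScore_diff_eq_relative_fisher_general
    (p q : ℝ → ℝ) (hp : ContDiff ℝ 2 p) (hq : ContDiff ℝ 2 q)
    (hppos : ∀ y, 0 < p y) (hqpos : ∀ y, 0 < q y)
    (hvanish_top : Tendsto (fun y => p y * scoreFn q y) atTop (nhds 0))
    (hvanish_bot : Tendsto (fun y => p y * scoreFn q y) atBot (nhds 0))
    (hvanishp_top : Tendsto (fun y => p y * scoreFn p y) atTop (nhds 0))
    (hvanishp_bot : Tendsto (fun y => p y * scoreFn p y) atBot (nhds 0))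
    (hint1 : Integrable (fun y => hyvScore q y * p y))
    (hint2 : Integrable (fun y => hyvScore p y * p y))
    (hint3 : Integrable (fun y => (scoreFn p y - scoreFn q y) ^ 2 * p y)) :
    (∫ y : ℝ, hyvScore q y * p y) - ∫ y : ℝ, hyvScore p y * p y =
      ∫ y : ℝ, (scoreFn p y - scoreFn q y) ^ 2 * p y := by
  have hint12 : Integrable (fun y => hyvScore q y * p y - hyvScore p y * p y) := hint1.sub hint2
  have hboundary := integral_of_hasDerivAt_of_tendsto
    (hasDerivAt_mul_scoreFn_sub hp hq (fun y => (hppos y).ne') (fun y => (hqpos y).ne'))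
    (hint12.sub hint3)
    (by simpa using (hvanish_bot.sub hvanishp_bot).const_mul 2)
    (by simpa using (hvanish_top.sub hvanishp_top).const_mul 2)
  rw [integral_sub hint12 hint3, integral_sub hint1 hint2] at hboundary
  linarith

/-- Integration-by-parts identity: the expected Hyvärinen score difference equals the
relative Fisher information divergence. -/
theorem expected_hyvScore_diff_eq_relative_fisher
    (p q : ℝ → ℝ) (hp : ContDiff ℝ 2 p) (hq : ContDiff ℝ 2 q)
    (hppos : ∀ y, 0 < p y) (hqpos : ∀ y, 0 < q y)
    (hpint : ∫ y : ℝ, p y = 1) (hqint : ∫ y : ℝ, q y = 1)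
    (hvanish_top : Tendsto (fun y => p y * scoreFn q y) atTop (nhds 0))
    (hvanish_bot : Tendsto (fun y => p y * scoreFn q y) atBot (nhds 0))
    (hvanishp_top : Tendsto (fun y => p y * scoreFn p y) atTop (nhds 0))
    (hvanishp_bot : Tendsto (fun y => p y * scoreFn p y) atBot (nhds 0))
    (hint1 : Integrable (fun y => hyvScore q y * p y))
    (hint2 : Integrable (fun y => hyvScore p y * p y))
    (hint3 : Integrable (fun y => (scoreFn p y - scoreFn q y) ^ 2 * p y))
    (hint4 : Integrable (fun y => scoreFn p y * scoreFn q y * p y))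
    (hint5 : Integrable (fun y => (scoreFn p y) ^ 2 * p y)) :
    (∫ y : ℝ, hyvScore q y * p y) - ∫ y : ℝ, hyvScore p y * p y =
      ∫ y : ℝ, (scoreFn p y - scoreFn q y) ^ 2 * p y :=
  expected_hyvScore_diff_eq_relative_fisher_general p q hp hq hppos hqpos hvanish_top hvanish_bot
    hvanishp_top hvanishp_bot hint1 hint2 hint3
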